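/- Let A be an alternating Büchi automaton, ≼_F a reflexive and transitive forward simulation on A such that A is ≼_F-unambiguous, ≼_B a reflexive and transitive backward simulation on A parametrised by ≼_F, ≼_M a mediated preorder induced by ≼_F and ≼_B, and A+ the automaton extended according to ≼_M. Then L(A+) = L(A). -/

import Mathlib

/-- An alternating Büchi automaton over alphabet `σ` with states `Q`:
initial state `ι`, transition function `δ` (where `P ∈ δ q a` means `q →a P`),
and accepting states `α`. -/
structure ABA (σ Q : Type*) where
  ι : Q
  δ : Q → σ → Set (Set Q)
  α : Set Q

variable {σ Q : Type*}

/-- The assumption `∅ ∉ δ(q, a)` for all `q, a`. -/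
def ABA.NoEmpty (A : ABA σ Q) : Prop := ∀ q a, ∅ ∉ A.δ q a

/-- The set of successors of a path `π` in a tree `T ⊆ Q⁺`. -/
def succs (T : Set (List Q)) (π : List Q) : Set Q := {q | π ++ [q] ∈ T}

/-- A tree over `Q`: a set of nonempty finite words over `Q`, closed under nonempty
prefixes and containing exactly one word of length one (its root). -/
structure IsTree (T : Set (List Q)) : Prop where
  not_nil : [] ∉ T
  prefix_closed : ∀ π ∈ T, ∀ ρ : List Q, ρ <+: π → ρ ≠ [] → ρ ∈ T
  root : ∃! q : Q, [q] ∈ T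

/-- The last state of a path (`A.ι` as a dummy for the empty path). -/
def lastSt (A : ABA σ Q) (π : List Q) : Q := π.getLastD A.ι

/-- A partial run of `A` on `w`: a finite tree in which every path either has no
successors or takes a transition of `A` on the appropriate letter of `w`. -/
structure IsPartialRun (A : ABA σ Q) (w : ℕ → σ) (T : Set (List Q)) : Prop where
  tree : IsTree T
  finite : T.Finite
  step : ∀ π ∈ T, succs T π = ∅ ∨ succs T π ∈ A.δ (lastSt A π) (w (π.length - 1))

/-- A run of `A` on `w`. -/
structure IsRun (A : ABA σ Q) (w : ℕ → σ) (T : Set (List Q)) : Prop where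
  tree : IsTree T
  step : ∀ π ∈ T, succs T π ∈ A.δ (lastSt A π) (w (π.length - 1))

/-- A (finite, maximal) branch of a tree. -/
def IsBranch (T : Set (List Q)) (π : List Q) : Prop := π ∈ T ∧ succs T π = ∅

/-- An infinite branch of a tree: all its nonempty finite prefixes belong to the tree. -/
def InfBranch (T : Set (List Q)) (ξ : ℕ → Q) : Prop :=
  ∀ n : ℕ, (List.ofFn fun i : Fin (n + 1) => ξ i) ∈ T

/-- A run is accepting iff every infinite branch contains infinitely many accepting
states. -/
def Accepting (A : ABA σ Q) (T : Set (List Q)) : Prop :=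
  ∀ ξ : ℕ → Q, InfBranch T ξ → ∀ n : ℕ, ∃ m ≥ n, ξ m ∈ A.α

/-- The language of `A`: the infinite words having an accepting run rooted at `ι`. -/
def ABA.Lang (A : ABA σ Q) : Set (ℕ → σ) :=
  {w | ∃ T : Set (List Q), IsRun A w T ∧ [A.ι] ∈ T ∧ Accepting A T}

/-- `p ≼_α r` : `p ∈ α ⇒ r ∈ α`. -/
def αle (A : ABA σ Q) (p r : Q) : Prop := p ∈ A.α → r ∈ A.α

/-- A forward simulation on `A`. -/
def ForwardSim (A : ABA σ Q) (F : Q → Q → Prop) : Prop :=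
  ∀ p r, F p r → (p ∈ A.α → r ∈ A.α) ∧
    ∀ a P, P ∈ A.δ p a → ∃ R ∈ A.δ r a, ∀ r' ∈ R, ∃ p' ∈ P, F p' r'

/-- A backward simulation on `A` parametrised by the forward simulation `F`. -/
def BackwardSim (A : ABA σ Q) (F B : Q → Q → Prop) : Prop :=
  ∀ p r, B p r → (p = A.ι → r = A.ι) ∧ (p ∈ A.α → r ∈ A.α) ∧
    ∀ a q P, p ∉ P → insert p P ∈ A.δ q a →
      ∃ s R, r ∉ R ∧ insert r R ∈ A.δ s a ∧ B q s ∧ ∀ y ∈ R, ∃ x ∈ P, F x y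

/-- `A` is `≼_F`-unambiguous: no transition has two distinct forward-equivalent states
on its right-hand side. -/
def Unambiguous (A : ABA σ Q) (F : Q → Q → Prop) : Prop :=
  ∀ p a P, P ∈ A.δ p a → ∀ q ∈ P, ∀ r ∈ P, q ≠ r → ¬ (F q r ∧ F r q)

/-- `M` is a mediated preorder induced by the forward simulation `F` and the backward
simulation `B`: a preorder containing `F`, contained in `F ∘ B⁻¹` (existence of a
mediator), and forward extensible. -/
structure IsMediated (F B M : Q → Q → Prop) : Prop where
  refl : Reflexive M
  trans : Transitive M
  le_f : ∀ q r, F q r → M q r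
  mediator : ∀ q r, M q r → ∃ s, F q s ∧ B r s
  fwd_ext : ∀ q r s, M q r → F r s → M q s

/-- The automaton `A⁺` extended according to the mediated preorder `M`:
`δ⁺(q, a) = ⋃ {δ(p, a) | p ≼_M q}` and `α⁺ = {p | ∃ q ∈ α, q ≡_M p}`. -/
def extABA (A : ABA σ Q) (M : Q → Q → Prop) : ABA σ Q where
  ι := A.ι
  δ := fun q a => {P | ∃ p, M p q ∧ P ∈ A.δ p a}
  α := {p | ∃ q ∈ A.α, M q p ∧ M p q}

/-!
From an accepting run of `A⁺` a run of `A` is rebuilt level by level, each state of `A` sitting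
on a node `u` of the given run and being accepting whenever `u` is accepting in `A⁺`. If `u` is
expanded by a transition of some `p ≼_M lastSt u`, mediation gives `s` with `p ≼_F s`, hence a
transition of `s` whose states are forward simulated by children of `u`. By induction on the depth,
each of those states is backward simulated by one that works at its child, and the backward
simulation rebuilds the transition around it, possibly introducing new states to fix.
Unambiguity makes this terminate: ranked by the number of states strictly simulating them, the
states still to fix decrease in a base-`|Q| + 1` weight. At the root, backward simulation keeps
`ι`. The finite approximations, one for every depth, yield an infinite run since each level offers
only finitely many choices (a König-type argument).
-/

section Shadowing

variable (A A' : ABA σ Q) (w : ℕ → σ) (T : Set (List Q))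

/-- `Shadows A A' w T d u q`: the automaton `A`, started in `q` at the node `u` of a tree `T` of
`A'`, can follow `T` for `d` levels, every state sitting on a node of `T` and being accepting
whenever that node is accepting for `A'`. -/
def Shadows : ℕ → List Q → Q → Prop
  | 0, u, q => lastSt A u ∈ A'.α → q ∈ A.α
  | d + 1, u, q => (lastSt A u ∈ A'.α → q ∈ A.α) ∧
      ∃ C ∈ A.δ q (w (u.length - 1)), ∀ c ∈ C, ∃ p ∈ succs T u, Shadows d (u ++ [p]) c

variable {A A' w T}

theorem Shadows.of_succ : ∀ {d : ℕ} {u : List Q} {q : Q},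
    Shadows A A' w T (d + 1) u q → Shadows A A' w T d u q
  | 0, _, _, h => h.1
  | _ + 1, _, _, ⟨hacc, C, hC, hch⟩ =>
    ⟨hacc, C, hC, fun c hc => (hch c hc).imp fun _ ⟨hp, hs⟩ => ⟨hp, hs.of_succ⟩⟩

theorem Shadows.of_forwardSim {F : Q → Q → Prop} (hF : ForwardSim A F) :
    ∀ {d : ℕ} {u : List Q} {q r : Q}, F q r → Shadows A A' w T d u q → Shadows A A' w T d u r
  | 0, _, _, _, hqr, h => fun hu => (hF _ _ hqr).1 (h hu)
  | _ + 1, _, _, _, hqr, ⟨hacc, C, hC, hch⟩ => by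
    obtain ⟨R, hR, hdom⟩ := (hF _ _ hqr).2 _ _ hC
    refine ⟨fun hu => (hF _ _ hqr).1 (hacc hu), R, hR, fun r hr => ?_⟩
    obtain ⟨c, hc, hcr⟩ := hdom r hr
    obtain ⟨p, hp, hs⟩ := hch c hc
    exact ⟨p, hp, hs.of_forwardSim hF hcr⟩

theorem exists_forall_of_antitone {α : Type*} [Finite α] {P : ℕ → α → Prop}
    (hP : ∀ x, Antitone (P · x)) (h : ∀ d, ∃ x, P d x) : ∃ x, ∀ d, P d x := by
  by_contra! hne
  choose D hD using hne
  obtain ⟨N, hN⟩ := (Set.finite_range D).bddAbove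
  obtain ⟨x, hx⟩ := h N
  exact hD x (hP x (hN ⟨x, rfl⟩) hx)

/-- The transition and the children of `T` witnessing `Shadows (d + 1)` may depend on `d`, but
only finitely many choices exist. -/
theorem Shadows.step_of_forall [Finite Q] {u : List Q} {q : Q}
    (h : ∀ d, Shadows A A' w T d u q) :
    (lastSt A u ∈ A'.α → q ∈ A.α) ∧ ∃ C ∈ A.δ q (w (u.length - 1)),
      ∀ c ∈ C, ∃ p ∈ succs T u, ∀ d, Shadows A A' w T d (u ++ [p]) c := by
  obtain ⟨C, hC⟩ := exists_forall_of_antitone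
    (P := fun d C => C ∈ A.δ q (w (u.length - 1)) ∧
      ∀ c ∈ C, ∃ p ∈ succs T u, Shadows A A' w T d (u ++ [p]) c)
    (fun _ => antitone_nat_of_succ_le fun _ ⟨hC, hch⟩ =>
      ⟨hC, fun c hc => (hch c hc).imp fun _ ⟨hp, hs⟩ => ⟨hp, hs.of_succ⟩⟩)
    (fun d => (h (d + 1)).2)
  refine ⟨h 0, C, (hC 0).1, fun c hc => ?_⟩
  obtain ⟨p, hp⟩ := exists_forall_of_antitone
    (P := fun d p => p ∈ succs T u ∧ Shadows A A' w T d (u ++ [p]) c)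
    (fun _ => antitone_nat_of_succ_le fun _ ⟨hp, hs⟩ => ⟨hp, hs.of_succ⟩)
    (fun d => (hC d).2 c hc)
  exact ⟨p, (hp 0).1, fun d => (hp d).2⟩

end Shadowing

/-- The tree grown from the root `q₀` by a strategy that sends a state `q` sitting on the node `u`
of another tree to the states `C u q`, the successor `c` sitting on `u ++ [child u q c]`.
`StrategyPath q₀ C child π u` says that `π` is a path of this tree sitting on `u`. -/
inductive StrategyPath (q₀ : Q) (C : List Q → Q → Set Q) (child : List Q → Q → Q → Q) :
    List Q → List Q → Prop
  | root : StrategyPath q₀ C child [q₀] [q₀]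
  | snoc {π u : List Q} {c : Q} : StrategyPath q₀ C child π u → c ∈ C u (π.getLastD q₀) →
      StrategyPath q₀ C child (π ++ [c]) (u ++ [child u (π.getLastD q₀) c])

namespace StrategyPath

variable {q₀ : Q} {C : List Q → Q → Set Q} {child : List Q → Q → Q → Q} {π u v : List Q}

theorem ne_nil (h : StrategyPath q₀ C child π u) : π ≠ [] := by
  cases h <;> simp

theorem length_eq (h : StrategyPath q₀ C child π u) : u.length = π.length := by
  induction h with
  | root => rfl
  | snoc _ _ ih => simp [ih]

theorem eq_root_of_singleton {q : Q} (h : StrategyPath q₀ C child [q] u) : q = q₀ ∧ u = [q₀] := by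
  generalize hq : [q] = π at h
  cases h with
  | root => exact ⟨List.singleton_inj.1 hq, rfl⟩
  | snoc h' _ =>
    obtain ⟨rfl, -⟩ | ⟨-, h⟩ := List.append_eq_singleton_iff.1 hq.symm
    · exact absurd rfl h'.ne_nil
    · simp at h

theorem of_snoc {c : Q} (h : StrategyPath q₀ C child (π ++ [c]) v) (hπ : π ≠ []) :
    ∃ u, StrategyPath q₀ C child π u ∧ c ∈ C u (π.getLastD q₀) ∧
      v = u ++ [child u (π.getLastD q₀) c] := by
  generalize hπc : π ++ [c] = π' at h
  cases h with
  | root =>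
    obtain ⟨rfl, -⟩ | ⟨-, h⟩ := List.append_eq_singleton_iff.1 hπc
    · exact absurd rfl hπ
    · simp at h
  | snoc h' hc =>
    obtain ⟨rfl, h⟩ := List.append_inj' hπc.symm rfl
    obtain rfl : _ = c := List.singleton_inj.1 h
    exact ⟨_, h', hc, rfl⟩

theorem unique (hu : StrategyPath q₀ C child π u) (hv : StrategyPath q₀ C child π v) : u = v := by
  induction hu generalizing v with
  | root => exact (eq_root_of_singleton hv).2.symm
  | snoc h _ ih =>
    obtain ⟨v', hv', -, rfl⟩ := hv.of_snoc h.ne_nil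
    rw [ih hv']

theorem exists_of_prefix (h : StrategyPath q₀ C child π u) {ρ : List Q} (hρ : ρ <+: π)
    (hne : ρ ≠ []) : ∃ v, StrategyPath q₀ C child ρ v := by
  induction h with
  | root =>
    obtain ⟨t, ht⟩ := hρ
    obtain ⟨rfl, -⟩ | ⟨rfl, -⟩ := List.append_eq_singleton_iff.1 ht
    · exact absurd rfl hne
    · exact ⟨_, root⟩
  | snoc h hc ih =>
    obtain rfl | hρ := List.prefix_concat_iff.1 hρ
    · exact ⟨_, h.snoc hc⟩
    · exact ih hρ

theorem isTree : IsTree {π | ∃ u, StrategyPath q₀ C child π u} where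
  not_nil := fun ⟨_, h⟩ => h.ne_nil rfl
  prefix_closed := fun _ ⟨_, h⟩ _ hρ hne => h.exists_of_prefix hρ hne
  root := ⟨q₀, ⟨_, root⟩, fun _ ⟨_, h⟩ => (eq_root_of_singleton h).1⟩

theorem succs_eq (h : StrategyPath q₀ C child π u) :
    succs {π | ∃ u, StrategyPath q₀ C child π u} π = C u (π.getLastD q₀) := by
  ext c
  constructor
  · rintro ⟨v, hv⟩
    obtain ⟨u', hu', hc, -⟩ := hv.of_snoc h.ne_nil
    rwa [h.unique hu']
  · exact fun hc => ⟨_, h.snoc hc⟩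

end StrategyPath

theorem eq_ofFn_getLastD_of_forall_snoc {α : Type*} (d : α) {u : ℕ → List α}
    (h0 : (u 0).length = 1) (hs : ∀ n, ∃ b, u (n + 1) = u n ++ [b]) (n : ℕ) :
    u n = List.ofFn fun i : Fin (n + 1) => (u i).getLastD d := by
  induction n with
  | zero =>
    obtain ⟨x, hx⟩ := List.length_eq_one_iff.1 h0
    simp [hx]
  | succ n ih =>
    obtain ⟨b, hb⟩ := hs n
    rw [hb, ih, List.ofFn_succ' (n := n + 1)]
    simp only [Fin.coe_castSucc, Fin.val_last, List.concat_eq_append, hb, List.getLastD_concat]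

theorem lastSt_ofFn (A : ABA σ Q) (ξ : ℕ → Q) (n : ℕ) :
    lastSt A (List.ofFn fun i : Fin (n + 1) => ξ i) = ξ n := by
  rw [List.ofFn_succ']
  simp [lastSt]

theorem mem_lang_of_strategy {A A' : ABA σ Q} {w : ℕ → σ} {T : Set (List Q)}
    (hroot : [A.ι] ∈ T) (hacc : Accepting A' T) (I : List Q → Q → Prop) (hI₀ : I [A.ι] A.ι)
    (hI : ∀ u q, I u q → (lastSt A u ∈ A'.α → q ∈ A.α) ∧
      ∃ C ∈ A.δ q (w (u.length - 1)), ∀ c ∈ C, ∃ p ∈ succs T u, I (u ++ [p]) c) :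
    w ∈ A.Lang := by
  have : Nonempty Q := ⟨A.ι⟩
  choose! hαI C hC child hchild hIchild using hI
  have inv : ∀ {π u}, StrategyPath A.ι C child π u → u ∈ T ∧ I u (lastSt A π) := by
    intro π u h
    induction h with
    | root => exact ⟨hroot, hI₀⟩
    | snoc _ hc ih =>
      exact ⟨hchild _ _ ih.2 _ hc, by simpa [lastSt] using hIchild _ _ ih.2 _ hc⟩
  refine ⟨{π | ∃ u, StrategyPath A.ι C child π u}, ⟨StrategyPath.isTree, fun π ⟨u, h⟩ => ?_⟩,
    ⟨_, .root⟩, fun ξ hξ n => ?_⟩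
  · rw [h.succs_eq, ← h.length_eq]
    exact hC _ _ (inv h).2
  choose u hu using hξ
  have hsnoc : ∀ k, ∃ b, u (k + 1) = u k ++ [b] := by
    intro k
    have h := hu (k + 1)
    rw [List.ofFn_succ'] at h
    simp only [Fin.coe_castSucc, Fin.val_last, List.concat_eq_append] at h
    obtain ⟨v, hv, -, huv⟩ := h.of_snoc (by simp)
    exact ⟨_, by rw [huv, (hu k).unique hv]⟩
  have hu0 : (u 0).length = 1 := by rw [(hu 0).length_eq]; simp
  have hbranch : InfBranch T fun i => lastSt A (u i) := fun k => by
    have h := (inv (hu k)).1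
    rwa [eq_ofFn_getLastD_of_forall_snoc A.ι hu0 hsnoc k] at h
  obtain ⟨m, hm, hmα⟩ := hacc _ hbranch n
  refine ⟨m, hm, ?_⟩
  rw [← lastSt_ofFn A ξ m]
  exact hαI _ _ (inv (hu m)).2 hmα

theorem sum_pow_lt_pow_of_lt {ι : Type*} (h : ι → ℕ) {K m : ℕ} {D : Finset ι}
    (hD : D.card < K) (hlt : ∀ z ∈ D, h z < m) : ∑ z ∈ D, K ^ h z < K ^ m := by
  have hK : 0 < K := (Nat.zero_le _).trans_lt hD
  rcases m with _ | m
  · rw [Finset.eq_empty_of_forall_notMem fun z hz => Nat.not_lt_zero _ (hlt z hz)]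
    simp
  · calc ∑ z ∈ D, K ^ h z ≤ ∑ _z ∈ D, K ^ m :=
          Finset.sum_le_sum fun z hz => Nat.pow_le_pow_right hK (Nat.le_of_lt_succ (hlt z hz))
      _ = D.card * K ^ m := by rw [Finset.sum_const, smul_eq_mul]
      _ < K * K ^ m := Nat.mul_lt_mul_of_pos_right hD (pow_pos hK m)
      _ = K ^ (m + 1) := (pow_succ' K m).symm

theorem sum_pow_lt_sum_pow_of_dominated {ι : Type*} [DecidableEq ι] (h : ι → ℕ) {K : ℕ}
    {N N' : Finset ι} {y : ι} (hy : y ∈ N) (hmax : ∀ x ∈ N, h x ≤ h y) (hK : N'.card < K)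
    (g : ι → ι) (hg : ∀ z ∈ N', g z ∈ N.erase y ∧ h z ≤ h (g z))
    (hinj : Set.InjOn g {z | z ∈ N' ∧ h z = h (g z)}) :
    ∑ z ∈ N', K ^ h z < ∑ z ∈ N, K ^ h z := by
  rw [← Finset.sum_filter_add_sum_filter_not N' (fun z => h z = h (g z)),
    ← Finset.add_sum_erase N _ hy, add_comm (K ^ h y)]
  apply add_lt_add_of_le_of_lt
  · calc ∑ z ∈ N' with h z = h (g z), K ^ h z
          = ∑ z ∈ N' with h z = h (g z), K ^ h (g z) :=
            Finset.sum_congr rfl fun z hz => by rw [(Finset.mem_filter.1 hz).2]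
      _ = ∑ x ∈ (N'.filter fun z => h z = h (g z)).image g, K ^ h x :=
            (Finset.sum_image (f := fun x => K ^ h x) fun _ h₁ _ h₂ =>
              hinj (Finset.mem_filter.1 h₁) (Finset.mem_filter.1 h₂)).symm
      _ ≤ ∑ x ∈ N.erase y, K ^ h x := by
            refine Finset.sum_le_sum_of_subset fun x hx => ?_
            obtain ⟨z, hz, rfl⟩ := Finset.mem_image.1 hx
            exact (hg z (Finset.mem_filter.1 hz).1).1
  · refine sum_pow_lt_pow_of_lt h ((Finset.card_filter_le _ _).trans_lt hK) fun z hz => ?_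
    obtain ⟨hz, hne⟩ := Finset.mem_filter.1 hz
    exact (lt_of_le_of_ne (hg z hz).2 hne).trans_le (hmax _ (Finset.mem_of_mem_erase (hg z hz).1))

noncomputable def simRank (F : Q → Q → Prop) (q : Q) : ℕ := {x | F q x ∧ ¬ F x q}.ncard

section BackwardSaturation

variable [Finite Q] {A : ABA σ Q} {F B : Q → Q → Prop}

theorem simRank_le (hFt : Transitive F) {a b : Q} (hab : F a b) : simRank F b ≤ simRank F a :=
  Set.ncard_le_ncard fun _ ⟨hbx, hxb⟩ => ⟨hFt hab hbx, fun hxa => hxb (hFt hxa hab)⟩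

theorem simRank_lt (hFt : Transitive F) {a b : Q} (hab : F a b) (hba : ¬ F b a) :
    simRank F b < simRank F a := by
  refine Set.ncard_lt_ncard ⟨fun _ ⟨hbx, hxb⟩ => ⟨hFt hab hbx, fun hxa => hxb (hFt hxa hab)⟩,
    fun hsub => ?_⟩
  obtain ⟨hbb, hnbb⟩ := hsub (show b ∈ {x | F a x ∧ ¬ F x a} from ⟨hab, hba⟩)
  exact hnbb hbb

theorem rel_of_simRank_eq (hFt : Transitive F) {a b : Q} (hab : F a b)
    (h : simRank F b = simRank F a) : F b a := by
  by_contra hba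
  exact (simRank_lt hFt hab hba).ne h

variable (F) in
noncomputable def simWeight (N : Finset Q) : ℕ := ∑ z ∈ N, (Nat.card Q + 1) ^ simRank F z

theorem exists_backwardSim_step (hFt : Transitive F) (hunamb : Unambiguous A F)
    (hB : BackwardSim A F B) {Good : Q → Prop} (hGood : ∀ x z, F x z → Good x → Good z)
    {a : σ} {ρ : Q} {C : Set Q} (hC : C ∈ A.δ ρ a) {N : Finset Q}
    (hN : ∀ c ∈ C, c ∉ N → Good c) {y c : Q} (hy : y ∈ N) (hyC : y ∈ C)
    (hmax : ∀ x ∈ N, simRank F x ≤ simRank F y) (hyc : B y c) (hc : Good c) :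
    ∃ ρ₂ C₂ N₂, B ρ ρ₂ ∧ C₂ ∈ A.δ ρ₂ a ∧ ↑N₂ ⊆ C₂ ∧ (∀ z ∈ C₂, z ∉ N₂ → Good z) ∧
      (∀ z ∈ N₂, ∃ x ∈ N, F x z) ∧ simWeight F N₂ < simWeight F N := by
  classical
  obtain ⟨ρ₂, R, -, hR, hρ, hdom⟩ := (hB y c hyc).2.2 a ρ (C \ {y}) (by simp)
    (by rwa [Set.insert_diff_singleton, Set.insert_eq_of_mem hyC])
  choose! g hgC hgF using hdom
  set N₂ := (Set.toFinite {z | z ∈ R ∧ ¬ Good z}).toFinset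
  have hN₂ : ∀ z, z ∈ N₂ ↔ z ∈ R ∧ ¬ Good z := fun z => Set.Finite.mem_toFinset _
  have hgN : ∀ z ∈ N₂, g z ∈ N.erase y := fun z hz => by
    obtain ⟨hzR, hz⟩ := (hN₂ z).1 hz
    obtain ⟨hgz, hgy⟩ := hgC z hzR
    exact Finset.mem_erase.2 ⟨hgy, by_contra fun h => hz (hGood _ _ (hgF z hzR) (hN _ hgz h))⟩
  refine ⟨ρ₂, insert c R, N₂, hρ, hR, fun z hz => Set.mem_insert_of_mem _ ((hN₂ z).1 hz).1,
    ?_, fun z hz => ⟨g z, Finset.mem_of_mem_erase (hgN z hz), hgF z ((hN₂ z).1 hz).1⟩, ?_⟩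
  · rintro z (rfl | hzR) hz
    · exact hc
    · exact by_contra fun h => hz ((hN₂ z).2 ⟨hzR, h⟩)
  refine sum_pow_lt_sum_pow_of_dominated _ hy hmax ?_ g
    (fun z hz => ⟨hgN z hz, simRank_le hFt (hgF z ((hN₂ z).1 hz).1)⟩) ?_
  · exact Nat.lt_succ_of_le ((Set.ncard_coe_finset N₂).symm.trans_le (Set.ncard_le_card _))
  rintro z₁ ⟨hz₁, he₁⟩ z₂ ⟨hz₂, he₂⟩ hg
  have hR₁ := ((hN₂ z₁).1 hz₁).1
  have hR₂ := ((hN₂ z₂).1 hz₂).1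
  -- equal ranks make `z₁ ≡_F g z₁ = g z₂ ≡_F z₂`, which unambiguity forbids unless `z₁ = z₂`
  have h₁ := rel_of_simRank_eq hFt (hgF z₁ hR₁) he₁
  have h₂ := rel_of_simRank_eq hFt (hgF z₂ hR₂) he₂
  by_contra hne
  exact hunamb ρ₂ a _ hR z₁ (Set.mem_insert_of_mem _ hR₁) z₂ (Set.mem_insert_of_mem _ hR₂) hne
    ⟨hFt h₁ (hg ▸ hgF z₂ hR₂), hFt h₂ (hg ▸ hgF z₁ hR₁)⟩

theorem exists_backwardSim_forall_good (hFt : Transitive F) (hunamb : Unambiguous A F)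
    (hBr : Reflexive B) (hBt : Transitive B) (hB : BackwardSim A F B) {Good Fixable : Q → Prop}
    (hGood : ∀ x z, F x z → Good x → Good z) (hFixable : ∀ x z, F x z → Fixable x → Fixable z)
    (hfix : ∀ y, Fixable y → ∃ c, B y c ∧ Good c) {a : σ} {ρ : Q} {C : Set Q}
    (hC : C ∈ A.δ ρ a) (hgr : ∀ c ∈ C, Good c ∨ Fixable c) :
    ∃ ρ', B ρ ρ' ∧ ∃ C' ∈ A.δ ρ' a, ∀ c ∈ C', Good c := by
  suffices H : ∀ (N : Finset Q) (ρ : Q) (C : Set Q), C ∈ A.δ ρ a → ↑N ⊆ C →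
      (∀ c ∈ C, c ∉ N → Good c) → (∀ y ∈ N, Fixable y) →
      ∃ ρ', B ρ ρ' ∧ ∃ C' ∈ A.δ ρ' a, ∀ c ∈ C', Good c by
    have hmem (c : Q) := (Set.toFinite {c | c ∈ C ∧ ¬ Good c}).mem_toFinset (a := c)
    refine H _ ρ C hC (fun c hc => ((hmem c).1 hc).1)
      (fun c hc hcN => by_contra fun h => hcN ((hmem c).2 ⟨hc, h⟩)) fun y hy => ?_
    obtain ⟨hyC, hy⟩ := (hmem y).1 hy
    exact (hgr y hyC).resolve_left hy
  intro N
  induction N using (measure (simWeight F)).wf.induction with | _ N ih => ?_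
  intro ρ C hC hNC hgood hNfix
  rcases N.eq_empty_or_nonempty with rfl | hne
  · exact ⟨ρ, hBr ρ, C, hC, fun c hc => hgood c hc (Finset.notMem_empty c)⟩
  obtain ⟨y, hy, hmax⟩ := N.exists_max_image (simRank F) hne
  obtain ⟨c, hyc, hc⟩ := hfix y (hNfix y hy)
  obtain ⟨ρ₂, C₂, N₂, hρ₂, hC₂, hN₂, hgood₂, hdom₂, hlt⟩ :=
    exists_backwardSim_step hFt hunamb hB hGood hC hgood hy (hNC hy) hmax hyc hc
  obtain ⟨ρ', hρ', hrest⟩ := ih N₂ hlt ρ₂ C₂ hC₂ hN₂ hgood₂ fun z hz => by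
    obtain ⟨x, hx, hxz⟩ := hdom₂ z hz
    exact hFixable x z hxz (hNfix x hx)
  exact ⟨ρ', hBt hρ₂ hρ', hrest⟩

end BackwardSaturation

theorem lang_subset_lang_extABA (A : ABA σ Q) {M : Q → Q → Prop} (hM : Reflexive M) :
    A.Lang ⊆ (extABA A M).Lang := by
  rintro w ⟨T, hrun, hroot, hacc⟩
  exact ⟨T, ⟨hrun.tree, fun π hπ => ⟨_, hM _, hrun.step π hπ⟩⟩, hroot,
    fun ξ hξ n => (hacc ξ hξ n).imp fun _ ⟨hm, hα⟩ => ⟨hm, _, hα, hM _, hM _⟩⟩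

section Mediation

variable {A : ABA σ Q} {F B M : Q → Q → Prop}

theorem IsMediated.exists_accepting_mediator (hM : IsMediated F B M) (hF : ForwardSim A F)
    (hBt : Transitive B) (hB : BackwardSim A F B) {p q r : Q} (hpq : M p q) (hqr : M q r) :
    ∃ s, F p s ∧ B r s ∧ (q ∈ (extABA A M).α → s ∈ A.α) := by
  by_cases hq : q ∈ (extABA A M).α
  · -- mediate through an accepting `q' ≡_M q`: its mediator with `r` is accepting
    obtain ⟨q', hq', hq'q, hqq'⟩ := hq
    obtain ⟨t, hq't, hrt⟩ := hM.mediator _ _ (hM.trans hq'q hqr)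
    obtain ⟨s, hps, hts⟩ := hM.mediator _ _ (hM.fwd_ext _ _ _ (hM.trans hpq hqq') hq't)
    exact ⟨s, hps, hBt hrt hts, fun _ => (hB t s hts).2.1 ((hF q' t hq't).1 hq')⟩
  · obtain ⟨s, hps, hrs⟩ := hM.mediator _ _ (hM.trans hpq hqr)
    exact ⟨s, hps, hrs, hq.elim⟩

theorem exists_backwardSim_shadows [Finite Q] (hFt : Transitive F) (hF : ForwardSim A F)
    (hunamb : Unambiguous A F) (hBr : Reflexive B) (hBt : Transitive B)
    (hB : BackwardSim A F B) (hM : IsMediated F B M) {w : ℕ → σ} {T : Set (List Q)}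
    (hrun : IsRun (extABA A M) w T) (d : ℕ) :
    ∀ u ∈ T, ∀ r, M (lastSt A u) r → ∃ s, B r s ∧ Shadows A (extABA A M) w T d u s := by
  induction d with
  | zero =>
    intro u hu r hr
    obtain ⟨p, hp, -⟩ := hrun.step u hu
    obtain ⟨s, -, hrs, hs⟩ := hM.exists_accepting_mediator hF hBt hB hp hr
    exact ⟨s, hrs, hs⟩
  | succ d ih =>
    intro u hu r hr
    obtain ⟨p, hp, hpT⟩ := hrun.step u hu
    obtain ⟨s, hps, hrs, hs⟩ := hM.exists_accepting_mediator hF hBt hB hp hr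
    obtain ⟨R, hR, hdom⟩ := (hF p s hps).2 _ _ hpT
    obtain ⟨s', hss', C, hC, hgood⟩ := exists_backwardSim_forall_good hFt hunamb hBr hBt hB
      (Good := fun c => ∃ p' ∈ succs T u, Shadows A (extABA A M) w T d (u ++ [p']) c)
      (Fixable := fun y => ∃ p' ∈ succs T u, F p' y)
      (fun _ _ hxz ⟨p', hp', h⟩ => ⟨p', hp', h.of_forwardSim hF hxz⟩)
      (fun _ _ hxz ⟨p', hp', h⟩ => ⟨p', hp', hFt h hxz⟩)
      (fun y ⟨p', hp', h⟩ => by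
        obtain ⟨c, hyc, hc⟩ := ih (u ++ [p']) hp' y (by simpa [lastSt] using hM.le_f _ _ h)
        exact ⟨c, hyc, p', hp', hc⟩)
      hR fun y hy => .inr (hdom y hy)
    exact ⟨s', hBt hrs hss', fun hu => (hB s s' hss').2.1 (hs hu), C, hC, hgood⟩

end Mediation

theorem stmt_17_general [Finite Q] (A : ABA σ Q)
    (F B M : Q → Q → Prop)
    (hFt : Transitive F) (hF : ForwardSim A F)
    (hunamb : Unambiguous A F)
    (hBr : Reflexive B) (hBt : Transitive B) (hB : BackwardSim A F B)
    (hM : IsMediated F B M) :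
    ABA.Lang (extABA A M) = ABA.Lang A := by
  refine Set.Subset.antisymm ?_ (lang_subset_lang_extABA A hM.refl)
  rintro w ⟨T, hrun, hroot, hacc⟩
  have shadows := exists_backwardSim_shadows hFt hF hunamb hBr hBt hB hM hrun
  refine mem_lang_of_strategy hroot hacc (fun u q => ∀ d, Shadows A (extABA A M) w T d u q)
    (fun d => ?_) fun _ _ h => Shadows.step_of_forall h
  obtain ⟨s, hs, h⟩ := shadows d [A.ι] hroot A.ι (hM.refl _)
  rwa [(hB _ _ hs).1 rfl] at h

/-- Extending `A` according to a mediated preorder preserves the language: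
`L(A⁺) = L(A)`. -/
theorem stmt_17 [Finite σ] [Finite Q] (A : ABA σ Q) (hne : A.NoEmpty)
    (F B M : Q → Q → Prop)
    (hFr : Reflexive F) (hFt : Transitive F) (hF : ForwardSim A F)
    (hunamb : Unambiguous A F)
    (hBr : Reflexive B) (hBt : Transitive B) (hB : BackwardSim A F B)
    (hM : IsMediated F B M) :
    ABA.Lang (extABA A M) = ABA.Lang A :=
  stmt_17_general A F B M hFt hF hunamb hBr hBt hB hM
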